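/- Let N > 0 and a ≠ 0 be real. The multiple Hermite polynomials satisfy, for all integers k₁, k₂ ≥ 1 and all z, the recurrence P_{k₁,k₂+1}(z) = (z + a)·P_{k₁,k₂}(z) − (k₁/N)·P_{k₁−1,k₂}(z) − (k₂/N)·P_{k₁,k₂−1}(z). -/

import Mathlib

open MeasureTheory Filter Topology Polynomial Asymptotics

noncomputable section

/-- first weight -/
def w1 (N a x : ℝ) : ℝ := Real.exp (-N * (x ^ 2 / 2 - a * x))

/-- second weight -/
def w2 (N a x : ℝ) : ℝ := Real.exp (-N * (x ^ 2 / 2 + a * x))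

/-- `P` is the multiple Hermite polynomial with indices `k₁, k₂`. -/
def IsMHP (N a : ℝ) (k₁ k₂ : ℕ) (P : Polynomial ℝ) : Prop :=
  P.Monic ∧ P.natDegree = k₁ + k₂ ∧
  (∀ j < k₁, ∫ x : ℝ, P.eval x * x ^ j * w1 N a x = 0) ∧
  (∀ j < k₂, ∫ x : ℝ, P.eval x * x ^ j * w2 N a x = 0)

/-- the normalization constant `h⁽¹⁾` -/
def hc1 (N a : ℝ) (k₁ : ℕ) (P : Polynomial ℝ) : ℝ :=
  ∫ x : ℝ, P.eval x * x ^ k₁ * w1 N a x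

/-- the normalization constant `h⁽²⁾` -/
def hc2 (N a : ℝ) (k₂ : ℕ) (P : Polynomial ℝ) : ℝ :=
  ∫ x : ℝ, P.eval x * x ^ k₂ * w2 N a x

/-!
Gaussian integrals turn polynomials into polynomials. With `H` the heat operator
`exp ((1 / 2N) d²/ds²)` one has `∫ D(x) w₁(s; x) dx = (∫ w₁(s; x) dx) · (H D)(s)`, where
`w₁(s; ·)` is the weight with parameter `s`: both sides are linear functionals of `D` obeying
Stein's identity `∫ x D w = s ∫ D w + N⁻¹ ∫ D' w` (integration by parts), which determines such a
functional from its value at `1`. Under `H`, multiplication by `x` becomes `X + N⁻¹ d/ds`, so the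
orthogonality conditions against `w₁ = w₁(a; ·)` and `w₂ = w₁(-a; ·)` say that `H P` vanishes to
order `k₁` at `a` and to order `k₂` at `-a`. As `H` preserves monic polynomials and does not raise
degrees, `H P_{k₁,k₂} = (s - a)^k₁ (s + a)^k₂`, and since `H` is injective the recurrence reduces
to the product rule for these products.
-/

section HeatOperator

variable {R : Type*} [CommRing R]

/-- `(heatPoly κ m).eval s` is the `m`-th moment of the normal law with mean `s` and variance `κ`,
and `heat κ = exp ((κ / 2) d²/dX²)` is the corresponding linear map on the monomial basis. -/
def heatPoly (κ : R) : ℕ → R[X]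
  | 0 => 1
  | m + 1 => X * heatPoly κ m + C κ * derivative (heatPoly κ m)

def heat (κ : R) : R[X] →ₗ[R] R[X] :=
  lsum fun m => LinearMap.toSpanSingleton R R[X] (heatPoly κ m)

lemma heat_apply (κ : R) (D : R[X]) : heat κ D = D.sum fun m c => c • heatPoly κ m := by
  simp [heat, lsum_apply]

lemma heat_monomial (κ : R) (n : ℕ) (c : R) : heat κ (monomial n c) = c • heatPoly κ n := by
  rw [heat_apply, sum_monomial_index _ _ (zero_smul R _)]

lemma heat_X_pow (κ : R) (n : ℕ) : heat κ (X ^ n) = heatPoly κ n := by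
  rw [← monomial_one_right_eq_X_pow, heat_monomial, one_smul]

lemma heat_C_mul (κ c : R) (D : R[X]) : heat κ (C c * D) = C c * heat κ D := by
  rw [C_mul', map_smul, smul_eq_C_mul]

lemma heat_X_mul (κ : R) (D : R[X]) :
    heat κ (X * D) = X * heat κ D + C κ * derivative (heat κ D) := by
  induction D using Polynomial.induction_on' with
  | add p q hp hq => rw [mul_add, map_add, hp, hq, map_add, derivative_add]; ring
  | monomial n c =>
    rw [X_mul_monomial, heat_monomial, heat_monomial, heatPoly, derivative_smul]
    simp only [smul_eq_C_mul]
    ring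

lemma derivative_heatPoly (κ : R) (m : ℕ) :
    derivative (heatPoly κ m) = C (m : R) * heatPoly κ (m - 1) := by
  induction m with
  | zero => simp [heatPoly]
  | succ m ih =>
    rw [heatPoly, derivative_add, derivative_mul, derivative_X, one_mul, derivative_C_mul, ih,
      derivative_C_mul]
    rcases m with _ | m
    · simp [heatPoly]
    · have hq : heatPoly κ (m + 1) = X * heatPoly κ m + C κ * derivative (heatPoly κ m) := rfl
      simp only [Nat.add_sub_cancel, Nat.cast_add, Nat.cast_one, map_add, map_one]
      linear_combination (-(C (m : R) + 1)) * hq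

lemma natDegree_heatPoly_le (κ : R) (m : ℕ) : (heatPoly κ m).natDegree ≤ m := by
  induction m with
  | zero => simp [heatPoly]
  | succ m ih =>
    refine (natDegree_add_le _ _).trans (max_le ?_ ?_)
    · exact natDegree_mul_le.trans (by have := natDegree_X_le (R := R); omega)
    · exact (natDegree_C_mul_le _ _).trans ((natDegree_derivative_le _).trans (by omega))

lemma coeff_heatPoly_self (κ : R) (m : ℕ) : (heatPoly κ m).coeff m = 1 := by
  induction m with
  | zero => simp [heatPoly]
  | succ m ih =>
    rw [heatPoly, coeff_add, coeff_X_mul, ih, coeff_C_mul, coeff_eq_zero_of_natDegree_lt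
      ((natDegree_derivative_le _).trans_lt ((Nat.sub_le _ _).trans_lt
        ((natDegree_heatPoly_le κ m).trans_lt m.lt_succ_self))), mul_zero, add_zero]

lemma natDegree_heat_le (κ : R) (D : R[X]) : (heat κ D).natDegree ≤ D.natDegree := by
  rw [heat_apply]
  refine natDegree_sum_le_of_forall_le _ _ fun i hi => ?_
  exact (natDegree_smul_le _ _).trans
    ((natDegree_heatPoly_le κ i).trans (le_natDegree_of_mem_supp i hi))

lemma coeff_heat_natDegree (κ : R) (D : R[X]) :
    (heat κ D).coeff D.natDegree = D.leadingCoeff := by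
  rw [heat_apply, Polynomial.sum, finsetSum_coeff,
    Finset.sum_eq_single D.natDegree (fun m hm hne => ?_) (fun hn => ?_)]
  · rw [coeff_smul, coeff_heatPoly_self, smul_eq_mul, mul_one, leadingCoeff]
  · have hlt : m < D.natDegree := (le_natDegree_of_mem_supp m hm).lt_of_ne hne
    rw [coeff_smul, coeff_eq_zero_of_natDegree_lt ((natDegree_heatPoly_le κ m).trans_lt hlt),
      smul_zero]
  · rw [coeff_smul, notMem_support_iff.mp hn, zero_smul]

lemma heat_injective (κ : R) : Function.Injective (heat κ) :=
  (injective_iff_map_eq_zero _).mpr fun D hD =>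
    leadingCoeff_eq_zero.mp (by rw [← coeff_heat_natDegree κ D, hD, coeff_zero])

lemma monic_heat {D : R[X]} (hD : D.Monic) (κ : R) : (heat κ D).Monic :=
  monic_of_natDegree_le_of_coeff_eq_one _ (natDegree_heat_le κ D) (coeff_heat_natDegree κ D ▸ hD)

theorem eq_mul_eval_heat_of_stein (φ : R[X] →ₗ[R] R) {κ s : R}
    (hφ : ∀ D, φ (X * D) = s * φ D + κ * φ (derivative D)) (D : R[X]) :
    φ D = φ 1 * (heat κ D).eval s := by
  have hpow : ∀ n, φ (X ^ n) = φ 1 * (heatPoly κ n).eval s := by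
    intro n
    induction n using Nat.strong_induction_on with
    | _ n ih =>
      rcases n with _ | n
      · simp [heatPoly]
      · rw [pow_succ', hφ, derivative_X_pow, C_mul', map_smul, ih n n.lt_succ_self,
          ih (n - 1) (by omega), heatPoly, derivative_heatPoly]
        simp only [eval_add, eval_mul, eval_X, eval_C, smul_eq_mul]
        ring
  induction D using Polynomial.induction_on' with
  | add p q hp hq => rw [map_add, map_add, eval_add, hp, hq, mul_add]
  | monomial n c =>
    rw [← smul_X_eq_monomial, map_smul, map_smul, eval_smul, hpow, heat_X_pow, smul_eq_mul,
      smul_eq_mul]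
    ring

end HeatOperator

/-- Writing `heat κ D = (X - a)^k G` with `k ≥ 1`, divisibility of
`heat κ (X * D) = X (heat κ D) + κ (heat κ D)'` by `(X - a)^k` forces `G (a) = 0`. -/
theorem pow_X_sub_C_dvd_heat {K : Type*} [Field K] [CharZero K] {κ : K} (hκ : κ ≠ 0) (a : K)
    (k : ℕ) (D : K[X]) (h : ∀ j < k, (heat κ (X ^ j * D)).eval a = 0) :
    (X - C a) ^ k ∣ heat κ D := by
  induction k generalizing D with
  | zero => simp
  | succ k ih =>
    obtain ⟨G, hG⟩ := ih D fun j hj => h j (by omega)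
    suffices G.IsRoot a by
      rw [pow_succ, hG]
      exact mul_dvd_mul_left _ (dvd_iff_isRoot.mpr this)
    rcases k with _ | k
    · simpa [hG] using h 0 (by omega)
    · have hXD := ih (X * D) fun j hj => by
        rw [← mul_assoc, ← pow_succ]
        exact h (j + 1) (by omega)
      rw [heat_X_mul, hG, derivative_mul, derivative_pow, derivative_X_sub_C, mul_one,
        Nat.add_sub_cancel] at hXD
      have hsplit : (X - C a) ^ (k + 1) ∣ (X - C a) ^ (k + 1) * (X * G + C κ * derivative G)
          + (X - C a) ^ k * (C κ * C ((k + 1 : ℕ) : K) * G) := by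
        convert hXD using 1
        ring
      have hdvd := (dvd_add_right (dvd_mul_right _ _)).mp hsplit
      rw [pow_succ, mul_dvd_mul_iff_left (pow_ne_zero k (X_sub_C_ne_zero a)), dvd_iff_isRoot,
        IsRoot, eval_mul, eval_mul, eval_C, eval_C] at hdvd
      exact (mul_eq_zero.mp hdvd).resolve_left
        (mul_ne_zero hκ (Nat.cast_ne_zero.mpr k.succ_ne_zero))

section GaussianWeight

variable {N : ℝ}

lemma w2_eq_w1_neg (N a : ℝ) : w2 N a = w1 N (-a) := by
  funext x
  simp only [w1, w2]
  ring_nf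

lemma hasDerivAt_w1 (N s x : ℝ) : HasDerivAt (w1 N s) (-N * (x - s) * w1 N s x) x := by
  have h : HasDerivAt (fun x => -N * (x ^ 2 / 2 - s * x)) (-N * (x - s)) x :=
    ((((hasDerivAt_pow 2 x).div_const 2).sub ((hasDerivAt_id x).const_mul s)).const_mul
      (-N)).congr_deriv (by simp)
  rw [mul_comm]
  exact h.exp

lemma integrable_eval_mul_exp_neg_mul_sq {b : ℝ} (hb : 0 < b) (D : ℝ[X]) :
    Integrable fun x => D.eval x * Real.exp (-b * x ^ 2) := by
  induction D using Polynomial.induction_on' with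
  | add p q hp hq =>
    simp only [eval_add, add_mul]
    exact hp.add hq
  | monomial n c =>
    simpa [mul_assoc, Real.rpow_natCast] using
      (integrable_rpow_mul_exp_neg_mul_sq hb (neg_one_lt_zero.trans_le n.cast_nonneg)).const_mul c

lemma integrable_eval_mul_w1 (hN : 0 < N) (s : ℝ) (D : ℝ[X]) :
    Integrable fun x => D.eval x * w1 N s x := by
  have h := ((integrable_eval_mul_exp_neg_mul_sq (half_pos hN) (D.comp (X + C s))).comp_sub_right
    s).const_mul (Real.exp (N * s ^ 2 / 2))
  refine h.congr (Eventually.of_forall fun x => ?_)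
  simp only [eval_comp, eval_add, eval_X, eval_C, sub_add_cancel, w1]
  rw [mul_left_comm, ← Real.exp_add]
  ring_nf

def w1Integral (hN : 0 < N) (s : ℝ) : ℝ[X] →ₗ[ℝ] ℝ where
  toFun D := ∫ x, D.eval x * w1 N s x
  map_add' D E := by
    simp only [eval_add, add_mul]
    exact integral_add (integrable_eval_mul_w1 hN s D) (integrable_eval_mul_w1 hN s E)
  map_smul' c D := by
    simp only [eval_smul, smul_eq_mul, mul_assoc, integral_const_mul, RingHom.id_apply]

lemma w1Integral_X_mul (hN : 0 < N) (s : ℝ) (D : ℝ[X]) :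
    w1Integral hN s (X * D) = s * w1Integral hN s D + N⁻¹ * w1Integral hN s (derivative D) := by
  have hibp := integral_mul_deriv_eq_deriv_mul_of_integrable (fun x _ => D.hasDerivAt x)
    (fun x _ => hasDerivAt_w1 N s x)
    ((integrable_eval_mul_w1 hN s (C (-N) * (X - C s) * D)).congr (Eventually.of_forall fun x => by
      simp only [eval_mul, eval_C, eval_sub, eval_X, Pi.mul_apply]
      ring))
    (integrable_eval_mul_w1 hN s (derivative D)) (integrable_eval_mul_w1 hN s D)
  have hlhs : ∫ x, D.eval x * (-N * (x - s) * w1 N s x)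
      = -N * (w1Integral hN s (X * D) - s * w1Integral hN s D) := by
    rw [← smul_eq_mul (a := s), ← map_smul, ← map_sub, ← smul_eq_mul, ← map_smul]
    simp only [w1Integral, LinearMap.coe_mk, AddHom.coe_mk, eval_smul, eval_sub, eval_mul, eval_X,
      smul_eq_mul]
    congr 1
    funext x
    ring
  have hrhs : ∫ x, (derivative D).eval x * w1 N s x = w1Integral hN s (derivative D) := rfl
  rw [hlhs, hrhs] at hibp
  field_simp
  linarith

theorem integral_eval_mul_w1 (hN : 0 < N) (s : ℝ) (D : ℝ[X]) :
    ∫ x, D.eval x * w1 N s x = (∫ x, w1 N s x) * (heat N⁻¹ D).eval s := by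
  simpa [w1Integral] using eq_mul_eval_heat_of_stein (w1Integral hN s) (w1Integral_X_mul hN s) D

lemma integral_w1_pos (hN : 0 < N) (s : ℝ) : 0 < ∫ x, w1 N s x :=
  integral_exp_pos (f := fun x => -N * (x ^ 2 / 2 - s * x)) (by
    have h := integrable_eval_mul_w1 hN s 1
    simp only [eval_one, one_mul] at h
    exact h)

lemma pow_X_sub_C_dvd_heat_of_orthogonal (hN : 0 < N) (s : ℝ) {k : ℕ} {P : ℝ[X]}
    (h : ∀ j < k, ∫ x, P.eval x * x ^ j * w1 N s x = 0) : (X - C s) ^ k ∣ heat N⁻¹ P := by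
  refine pow_X_sub_C_dvd_heat (inv_ne_zero hN.ne') s k P fun j hj => ?_
  have hI := integral_eval_mul_w1 hN s (X ^ j * P)
  simp only [eval_mul, eval_pow, eval_X, mul_comm (_ ^ j) (P.eval _), h j hj] at hI
  exact (mul_eq_zero.mp hI.symm).resolve_left (integral_w1_pos hN s).ne'

end GaussianWeight

theorem heat_eq_of_isMHP {N a : ℝ} (hN : 0 < N) (ha : a ≠ 0) {k₁ k₂ : ℕ} {P : ℝ[X]}
    (hP : IsMHP N a k₁ k₂ P) : heat N⁻¹ P = (X - C a) ^ k₁ * (X + C a) ^ k₂ := by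
  obtain ⟨hmon, hdeg, h₁, h₂⟩ := hP
  have hdvd₁ := pow_X_sub_C_dvd_heat_of_orthogonal hN a h₁
  have hdvd₂ : (X + C a) ^ k₂ ∣ heat N⁻¹ P := by
    simpa using pow_X_sub_C_dvd_heat_of_orthogonal hN (-a) (by simpa [w2_eq_w1_neg] using h₂)
  have hcop : IsCoprime ((X - C a) ^ k₁) ((X + C a) ^ k₂) := by
    have := isCoprime_X_sub_C_of_isUnit_sub (R := ℝ) (a := a) (b := -a) (by
      rw [sub_neg_eq_add, isUnit_iff_ne_zero]; contrapose! ha; linarith)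
    simpa using this.pow
  have hW : ((X - C a) ^ k₁ * (X + C a) ^ k₂).Monic :=
    ((monic_X_sub_C a).pow k₁).mul ((monic_X_add_C a).pow k₂)
  refine eq_of_monic_of_dvd_of_natDegree_le hW (monic_heat hmon _) (hcop.mul_dvd hdvd₁ hdvd₂) ?_
  rw [Monic.natDegree_mul ((monic_X_sub_C a).pow k₁) ((monic_X_add_C a).pow k₂), natDegree_pow,
    natDegree_pow, natDegree_X_sub_C, natDegree_X_add_C, mul_one, mul_one, ← hdeg]
  exact natDegree_heat_le _ _

theorem statement14_general (N a : ℝ) (hN : 0 < N) (ha : a ≠ 0)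
    (P : ℕ → ℕ → Polynomial ℝ) (hP : ∀ k₁ k₂ : ℕ, IsMHP N a k₁ k₂ (P k₁ k₂))
    (k₁ k₂ : ℕ) :
    ∀ z : ℝ, (P k₁ (k₂ + 1)).eval z =
      (z + a) * (P k₁ k₂).eval z - (k₁ : ℝ) / N * (P (k₁ - 1) k₂).eval z -
        (k₂ : ℝ) / N * (P k₁ (k₂ - 1)).eval z := by
  have hH : ∀ i j, heat N⁻¹ (P i j) = (X - C a) ^ i * (X + C a) ^ j :=
    fun i j => heat_eq_of_isMHP hN ha (hP i j)
  have hrec : P k₁ (k₂ + 1) = (X + C a) * P k₁ k₂ - C ((k₁ : ℝ) / N) * P (k₁ - 1) k₂ -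
      C ((k₂ : ℝ) / N) * P k₁ (k₂ - 1) := by
    apply heat_injective N⁻¹
    rw [map_sub, map_sub, add_mul, map_add, heat_X_mul, heat_C_mul, heat_C_mul, heat_C_mul, hH,
      hH, hH, hH, derivative_mul, derivative_pow, derivative_pow, derivative_X_sub_C,
      derivative_X_add_C, div_eq_mul_inv, div_eq_mul_inv, C_mul, C_mul]
    ring
  intro z
  simpa using congr_arg (eval z) hrec

/-- Recurrence in the second index for multiple Hermite polynomials. -/
theorem statement14 (N a : ℝ) (hN : 0 < N) (ha : a ≠ 0)
    (P : ℕ → ℕ → Polynomial ℝ) (hP : ∀ k₁ k₂ : ℕ, IsMHP N a k₁ k₂ (P k₁ k₂))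
    (k₁ k₂ : ℕ) (hk₁ : 1 ≤ k₁) (hk₂ : 1 ≤ k₂) :
    ∀ z : ℝ, (P k₁ (k₂ + 1)).eval z =
      (z + a) * (P k₁ k₂).eval z - (k₁ : ℝ) / N * (P (k₁ - 1) k₂).eval z -
        (k₂ : ℝ) / N * (P k₁ (k₂ - 1)).eval z :=
  statement14_general N a hN ha P hP k₁ k₂

end
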